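/- Let (v_0,v_1,v_2,v_3) and (u_0,u_1,u_2,u_3) be two simple quadrilaterals in ℝ² with equal corresponding edge lengths (‖v_{(i+1) mod 4} − v_i‖ = ‖u_{(i+1) mod 4} − u_i‖ for all i), each reflex at its third vertex (v_2 in the interior of triangle v_0 v_1 v_3, u_2 in the interior of triangle u_0 u_1 u_3). Then the length of the interior diagonal increases if and only if the length of the exterior diagonal increases: ‖v_2 − v_0‖ < ‖u_2 − u_0‖ if and only if ‖v_3 − v_1‖ < ‖u_3 − u_1‖. -/

import Mathlib

open scoped EuclideanGeometry RealInnerProductSpace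

noncomputable section

abbrev E2 : Type := EuclideanSpace ℝ (Fin 2)
abbrev E3 : Type := EuclideanSpace ℝ (Fin 3)

/-- Simplicity of a closed polygonal chain with vertices `v 0, …, v (n-1)`
and edges `[v i, v ((i+1) % n)]`. -/
def IsSimpleClosedChain {E : Type*} [NormedAddCommGroup E] [NormedSpace ℝ E]
    (n : ℕ) (v : ℕ → E) : Prop :=
  (∀ i < n, ∀ j < n, i ≠ j → (i + 1) % n ≠ j → (j + 1) % n ≠ i →
    Disjoint (segment ℝ (v i) (v ((i+1) % n))) (segment ℝ (v j) (v ((j+1) % n)))) ∧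
  ∀ i < n, segment ℝ (v i) (v ((i+1) % n)) ∩
      segment ℝ (v ((i+1) % n)) (v ((i+2) % n)) = {v ((i+1) % n)}

/-- A motion of a closed chain: continuous on `[0,1]`, starting at `v`,
preserving all edge lengths and simplicity. -/
def IsClosedChainMotion {E : Type*} [NormedAddCommGroup E] [NormedSpace ℝ E]
    (n : ℕ) (v : ℕ → E) (f : ℝ → ℕ → E) : Prop :=
  (∀ i < n, ContinuousOn (fun t => f t i) (Set.Icc (0:ℝ) 1)) ∧
  (∀ i < n, f 0 i = v i) ∧
  (∀ t ∈ Set.Icc (0:ℝ) 1, ∀ i < n,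
    dist (f t ((i+1) % n)) (f t i) = dist (v ((i+1) % n)) (v i)) ∧
  (∀ t ∈ Set.Icc (0:ℝ) 1, IsSimpleClosedChain n (f t))

/-- A simple quadrilateral `(v 0, v 1, v 2, v 3)` that is reflex at `v 2`:
`v 2` lies in the interior of the triangle `v 0 v 1 v 3`. -/
def SimpleReflexQuad (v : ℕ → E2) : Prop :=
  IsSimpleClosedChain 4 v ∧ v 2 ∈ interior (convexHull ℝ ({v 0, v 1, v 3} : Set E2))

/-!
Write α = ∠v₁v₀v₃, β = ∠v₀v₁v₂, γ = ∠v₁v₂v₃, δ = ∠v₀v₃v₂. Since v₂ lies inside the triangle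
v₀v₁v₃, angle chasing gives γ = α + β + δ. With the four sides fixed, β and δ are increasing
functions of the interior diagonal (law of cosines), while γ - α is an increasing function of
the exterior diagonal q: as functions of q², γ and α have derivatives 1 / (4 area(v₁v₂v₃)) and
1 / (4 area(v₀v₁v₃)), and the inner triangle has the smaller area. Hence both diagonals grow
together.
-/

open EuclideanGeometry Real

/-- Sixteen times the squared area of a triangle with sides `x`, `y` and `√u` (Heron). -/
def heron (x y u : ℝ) : ℝ := 4 * x ^ 2 * y ^ 2 - (x ^ 2 + y ^ 2 - u) ^ 2

/-- The angle between the sides `x` and `y` of a triangle whose third side is `√u`. -/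
def triangleAngle (x y u : ℝ) : ℝ := arccos ((x ^ 2 + y ^ 2 - u) / (2 * x * y))

section TriangleAngle

variable {x y u : ℝ}

lemma heron_eq_mul_one_sub_sq (hx : x ≠ 0) (hy : y ≠ 0) :
    heron x y u = (2 * x * y) ^ 2 * (1 - ((x ^ 2 + y ^ 2 - u) / (2 * x * y)) ^ 2) := by
  unfold heron
  field_simp
  ring

lemma div_mem_Icc_of_heron_nonneg (hx : 0 < x) (hy : 0 < y) (h : 0 ≤ heron x y u) :
    (x ^ 2 + y ^ 2 - u) / (2 * x * y) ∈ Set.Icc (-1) 1 := by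
  rw [heron_eq_mul_one_sub_sq hx.ne' hy.ne'] at h
  have := (mul_nonneg_iff_of_pos_left (by positivity)).mp h
  constructor <;> nlinarith

lemma strictMonoOn_triangleAngle (hx : 0 < x) (hy : 0 < y) :
    StrictMonoOn (triangleAngle x y) {u | 0 ≤ heron x y u} := by
  intro u hu u' hu' huu'
  refine strictAntiOn_arccos (div_mem_Icc_of_heron_nonneg hx hy hu')
    (div_mem_Icc_of_heron_nonneg hx hy hu) ?_
  gcongr

lemma hasDerivAt_triangleAngle (hx : 0 < x) (hy : 0 < y) (h : 0 < heron x y u) :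
    HasDerivAt (triangleAngle x y) (√(heron x y u))⁻¹ u := by
  set z := (x ^ 2 + y ^ 2 - u) / (2 * x * y)
  rw [heron_eq_mul_one_sub_sq hx.ne' hy.ne'] at h ⊢
  have hz : 0 < 1 - z ^ 2 := pos_of_mul_pos_right h (by positivity)
  have harg : HasDerivAt (fun u => (x ^ 2 + y ^ 2 - u) / (2 * x * y)) (-1 / (2 * x * y)) u :=
    ((hasDerivAt_id u).const_sub _).div_const _
  refine ((hasDerivAt_arccos (x := z) (by nlinarith) (by nlinarith)).comp u harg).congr_deriv ?_
  rw [sqrt_mul (by positivity), sqrt_sq (by positivity)]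
  ring

end TriangleAngle

lemma ordConnected_heron_lt_heron {a b c d : ℝ} :
    Set.OrdConnected {u | 0 < heron b c u ∧ heron b c u < heron a d u} := by
  refine ⟨fun u hu u' hu' t ht => ?_⟩
  obtain ⟨hu₁, hu₂⟩ := hu
  obtain ⟨hu'₁, hu'₂⟩ := hu'
  obtain ⟨ht₁, ht₂⟩ := ht
  -- `heron b c` is a concave quadratic in `u`, and `heron a d - heron b c` is affine in `u`
  have hconcave : (u' - u) * heron b c t
      = (u' - t) * heron b c u + (t - u) * heron b c u' + (t - u) * (u' - t) * (u' - u) := by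
    unfold heron; ring
  have haffine : (u' - u) * (heron a d t - heron b c t)
      = (u' - t) * (heron a d u - heron b c u) + (t - u) * (heron a d u' - heron b c u') := by
    unfold heron; ring
  rcases ht₁.eq_or_lt with rfl | ht₁
  · exact ⟨hu₁, hu₂⟩
  constructor
  · nlinarith [mul_nonneg (sub_nonneg.2 ht₂) hu₁.le, mul_pos (sub_pos.2 ht₁) hu'₁,
      mul_nonneg (mul_nonneg (sub_pos.2 ht₁).le (sub_nonneg.2 ht₂))
        (sub_pos.2 (ht₁.trans_le ht₂)).le]
  · nlinarith [mul_nonneg (sub_nonneg.2 ht₂) (sub_pos.2 hu₂).le,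
      mul_pos (sub_pos.2 ht₁) (sub_pos.2 hu'₂)]

lemma strictMonoOn_triangleAngle_sub_triangleAngle {a b c d : ℝ} (ha : 0 < a) (hb : 0 < b)
    (hc : 0 < c) (hd : 0 < d) :
    StrictMonoOn (fun u => triangleAngle b c u - triangleAngle a d u)
      {u | 0 < heron b c u ∧ heron b c u < heron a d u} := by
  have hderiv : ∀ u ∈ {u | 0 < heron b c u ∧ heron b c u < heron a d u},
      HasDerivAt (fun u => triangleAngle b c u - triangleAngle a d u)
        ((√(heron b c u))⁻¹ - (√(heron a d u))⁻¹) u := fun u hu =>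
    (hasDerivAt_triangleAngle hb hc hu.1).sub (hasDerivAt_triangleAngle ha hd (hu.1.trans hu.2))
  refine strictMonoOn_of_deriv_pos ordConnected_heron_lt_heron.convex
    (fun u hu => (hderiv u hu).continuousAt.continuousWithinAt) fun u hu => ?_
  have hu := interior_subset hu
  rw [(hderiv u hu).deriv, sub_pos]
  exact inv_strictAnti₀ (sqrt_pos.2 hu.1) (sqrt_lt_sqrt hu.1.le hu.2)

/-- The sides `a = |v₀v₁|, b = |v₁v₂|, c = |v₂v₃|, d = |v₃v₀|` and the squared diagonals
`s = |v₀v₂|², t = |v₁v₃|²` of a quadrilateral reflex at `v₂`, through the angle identity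
`β + δ = γ - α` and the area comparison `area(v₁v₂v₃) < area(v₀v₁v₃)`. -/
structure IsReflexQuadShape (a b c d s t : ℝ) : Prop where
  a_pos : 0 < a
  b_pos : 0 < b
  c_pos : 0 < c
  d_pos : 0 < d
  angle_eq : triangleAngle a b s + triangleAngle d c s = triangleAngle b c t - triangleAngle a d t
  heron_ab_nonneg : 0 ≤ heron a b s
  heron_dc_nonneg : 0 ≤ heron d c s
  heron_bc_pos : 0 < heron b c t
  heron_bc_lt : heron b c t < heron a d t

theorem IsReflexQuadShape.lt_iff_lt {a b c d s t s' t' : ℝ} (h : IsReflexQuadShape a b c d s t)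
    (h' : IsReflexQuadShape a b c d s' t') : s < s' ↔ t < t' := by
  have hinner : StrictMonoOn (fun s => triangleAngle a b s + triangleAngle d c s)
      ({s | 0 ≤ heron a b s} ∩ {s | 0 ≤ heron d c s}) :=
    ((strictMonoOn_triangleAngle h.a_pos h.b_pos).mono Set.inter_subset_left).add
      ((strictMonoOn_triangleAngle h.d_pos h.c_pos).mono Set.inter_subset_right)
  have houter := strictMonoOn_triangleAngle_sub_triangleAngle h.a_pos h.b_pos h.c_pos h.d_pos
  rw [← hinner.lt_iff_lt ⟨h.heron_ab_nonneg, h.heron_dc_nonneg⟩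
      ⟨h'.heron_ab_nonneg, h'.heron_dc_nonneg⟩,
    ← houter.lt_iff_lt ⟨h.heron_bc_pos, h.heron_bc_lt⟩ ⟨h'.heron_bc_pos, h'.heron_bc_lt⟩]
  simp only [h.angle_eq, h'.angle_eq]

section Triangle

variable {V : Type*} [NormedAddCommGroup V] [InnerProductSpace ℝ V]

lemma cos_angle_eq_div {a b c : V} (hab : a ≠ b) (hcb : c ≠ b) :
    cos (∠ a b c) = (dist a b ^ 2 + dist c b ^ 2 - dist a c ^ 2) / (2 * dist a b * dist c b) := by
  have := law_cos a b c
  rw [eq_div_iff (by simp [dist_ne_zero.2 hab, dist_ne_zero.2 hcb])]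
  linarith

lemma angle_eq_triangleAngle {a b c : V} (hab : a ≠ b) (hcb : c ≠ b) :
    ∠ a b c = triangleAngle (dist a b) (dist c b) (dist a c ^ 2) := by
  rw [triangleAngle, ← cos_angle_eq_div hab hcb,
    arccos_cos (angle_nonneg a b c) (angle_le_pi a b c)]

lemma heron_dist_eq_sq (a b c : V) :
    heron (dist a b) (dist c b) (dist a c ^ 2) = (2 * dist a b * dist c b * sin (∠ a b c)) ^ 2 := by
  have := law_cos a b c
  rw [heron, show dist a b ^ 2 + dist c b ^ 2 - dist a c ^ 2
    = 2 * dist a b * dist c b * cos (∠ a b c) by linarith]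
  linear_combination -(2 * dist a b * dist c b) ^ 2 * sin_sq_add_cos_sq (∠ a b c)

lemma heron_dist_eq_gram (a b c : V) :
    heron (dist a b) (dist c b) (dist a c ^ 2)
      = 4 * (⟪a - b, a - b⟫ * ⟪c - b, c - b⟫ - ⟪a - b, c - b⟫ ^ 2) := by
  have h : a - c = (a - b) - (c - b) := by abel
  rw [heron, dist_eq_norm a b, dist_eq_norm c b, dist_eq_norm a c, h,
    norm_sub_sq_real (a - b) (c - b), ← real_inner_self_eq_norm_sq, ← real_inner_self_eq_norm_sq]
  ring

lemma heron_dist_of_weights {a b c p : V} {wa wb wc : ℝ} (hw : wa + wb + wc = 1)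
    (hp : p = wa • a + wb • b + wc • c) :
    heron (dist b p) (dist c p) (dist b c ^ 2)
      = wa ^ 2 * heron (dist b a) (dist c a) (dist b c ^ 2) := by
  obtain rfl : wa = 1 - wb - wc := by linarith
  have hb : b - p = (1 - wb) • (b - a) - wc • (c - a) := by rw [hp]; module
  have hc : c - p = (-wb) • (b - a) + (1 - wc) • (c - a) := by rw [hp]; module
  rw [heron_dist_eq_gram, heron_dist_eq_gram, hb, hc]
  generalize b - a = x
  generalize c - a = y
  simp only [inner_add_left, inner_add_right, inner_sub_left, inner_sub_right,
    real_inner_smul_left, real_inner_smul_right, real_inner_comm x y]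
  ring

lemma sub_eq_smul_lineMap_sub {a b c p : V} {wa wb wc : ℝ} (hbc : 0 < wb + wc)
    (hw : wa + wb + wc = 1) (hp : p = wa • a + wb • b + wc • c) :
    p - a = (wb + wc) • (AffineMap.lineMap b c (wc / (wb + wc)) - a) := by
  obtain rfl : wa = 1 - wb - wc := by linarith
  rw [AffineMap.lineMap_apply_module, hp, smul_sub, smul_add, smul_smul, smul_smul,
    mul_sub, mul_one, mul_div_cancel₀ _ hbc.ne']
  module

lemma ne_of_pos_weights {a b c p : V} {wa wb wc : ℝ} (hwb : 0 < wb) (hwc : 0 < wc)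
    (hw : wa + wb + wc = 1) (hp : p = wa • a + wb • b + wc • c)
    (h : ¬Collinear ℝ {a, b, c}) : p ≠ a := by
  rintro rfl
  have := sub_eq_smul_lineMap_sub (by positivity) hw hp
  rw [sub_self, eq_comm, smul_eq_zero_iff_right (by positivity), sub_eq_zero] at this
  exact h (collinear_insert_of_mem_affineSpan_pair
    (this ▸ AffineMap.lineMap_mem_affineSpan_pair _ _ _))

lemma angle_eq_angle_add_angle_of_pos_weights {a b c p : V} {wa wb wc : ℝ} (hwb : 0 < wb)
    (hwc : 0 < wc) (hw : wa + wb + wc = 1) (hp : p = wa • a + wb • b + wc • c) (hbc : b ≠ c)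
    (hpa : p ≠ a) : ∠ b a c = ∠ b a p + ∠ p a c := by
  refine (angle_add_angle_eq_of_sbtw_of_sameRay (x := AffineMap.lineMap b c (wc / (wb + wc)))
    (sbtw_lineMap_iff.2 ⟨hbc, ?_, ?_⟩) ?_ hpa).symm
  · positivity
  · rw [div_lt_one (by positivity)]
    linarith
  · rw [vsub_eq_sub, vsub_eq_sub, sub_eq_smul_lineMap_sub (by positivity) hw hp]
    exact SameRay.sameRay_pos_smul_right _ (by positivity)

theorem angle_eq_angle_add_angle_add_angle_of_pos_weights {a b c p : V} {wa wb wc : ℝ}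
    (hwa : 0 < wa) (hwb : 0 < wb) (hwc : 0 < wc) (hw : wa + wb + wc = 1)
    (hp : p = wa • a + wb • b + wc • c) (h : ¬Collinear ℝ {a, b, c}) :
    ∠ b p c = ∠ b a c + ∠ a b p + ∠ a c p := by
  have hpb : p = wb • b + wa • a + wc • c := by rw [hp]; abel
  have hpc : p = wc • c + wa • a + wb • b := by rw [hp]; abel
  have hb : ¬Collinear ℝ {b, a, c} := by rwa [Set.insert_comm]
  have hc : ¬Collinear ℝ {c, a, b} := by rwa [Set.insert_comm, Set.pair_comm, Set.insert_comm]
  have hsplit_b : ∠ a b c = ∠ a b p + ∠ p b c :=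
    angle_eq_angle_add_angle_of_pos_weights hwa hwc (by linarith) hpb (ne₁₃_of_not_collinear h)
      (ne_of_pos_weights hwa hwc (by linarith) hpb hb)
  have hsplit_c : ∠ a c b = ∠ a c p + ∠ p c b :=
    angle_eq_angle_add_angle_of_pos_weights hwa hwb (by linarith) hpc (ne₁₂_of_not_collinear h)
      (ne_of_pos_weights hwa hwb (by linarith) hpc hc)
  have hsum_abc := angle_add_angle_add_angle_eq_pi c (ne₁₂_of_not_collinear h).symm
  have hsum_pbc := angle_add_angle_add_angle_eq_pi p (ne₂₃_of_not_collinear h).symm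
  rw [angle_comm b c a, angle_comm c a b] at hsum_abc
  rw [angle_comm c p b] at hsum_pbc
  rw [angle_comm p c b] at hsplit_c
  linarith

theorem isReflexQuadShape_of_pos_weights {v₀ v₁ v₂ v₃ : V} {w₀ w₁ w₃ : ℝ} (h₀ : 0 < w₀)
    (h₁ : 0 < w₁) (h₃ : 0 < w₃) (hw : w₀ + w₁ + w₃ = 1) (hv : v₂ = w₀ • v₀ + w₁ • v₁ + w₃ • v₃)
    (hcol : ¬Collinear ℝ {v₀, v₁, v₃}) :
    IsReflexQuadShape (dist v₁ v₀) (dist v₂ v₁) (dist v₃ v₂) (dist v₀ v₃)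
      (dist v₂ v₀ ^ 2) (dist v₃ v₁ ^ 2) := by
  have hv₁ : v₂ = w₁ • v₁ + w₀ • v₀ + w₃ • v₃ := by rw [hv]; abel
  have hv₃ : v₂ = w₃ • v₃ + w₀ • v₀ + w₁ • v₁ := by rw [hv]; abel
  have hcol₁ : ¬Collinear ℝ {v₁, v₀, v₃} := by rwa [Set.insert_comm]
  have hcol₃ : ¬Collinear ℝ {v₃, v₀, v₁} := by
    rwa [Set.insert_comm, Set.pair_comm, Set.insert_comm]
  have h₁₀ := (ne₁₂_of_not_collinear hcol).symm
  have h₃₀ := (ne₁₃_of_not_collinear hcol).symm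
  have h₂₁ : v₂ ≠ v₁ := ne_of_pos_weights h₀ h₃ (by linarith) hv₁ hcol₁
  have h₂₃ : v₂ ≠ v₃ := ne_of_pos_weights h₀ h₁ (by linarith) hv₃ hcol₃
  have hheron := heron_dist_of_weights hw hv
  rw [dist_comm v₁ v₂, dist_comm v₁ v₃, dist_comm v₃ v₀] at hheron
  have hheron_pos : 0 < heron (dist v₁ v₀) (dist v₀ v₃) (dist v₃ v₁ ^ 2) := by
    rw [dist_comm v₀ v₃, dist_comm v₃ v₁, heron_dist_eq_sq]
    have := sin_pos_of_not_collinear hcol₁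
    have := dist_pos.2 h₁₀
    have := dist_pos.2 h₃₀
    positivity
  refine ⟨dist_pos.2 h₁₀, dist_pos.2 h₂₁, dist_pos.2 h₂₃.symm, dist_pos.2 h₃₀.symm, ?_, ?_, ?_,
    ?_, ?_⟩
  · have hsum := angle_eq_angle_add_angle_add_angle_of_pos_weights h₀ h₁ h₃ hw hv hcol
    rw [angle_eq_triangleAngle h₂₁.symm h₂₃.symm, angle_eq_triangleAngle h₁₀ h₃₀,
      angle_eq_triangleAngle h₁₀.symm h₂₁, angle_eq_triangleAngle h₃₀.symm h₂₃,
      dist_comm v₀ v₁, dist_comm v₀ v₂, dist_comm v₂ v₃, dist_comm v₁ v₂, dist_comm v₁ v₃,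
      dist_comm v₃ v₀] at hsum
    linarith
  · rw [dist_comm v₁ v₀, dist_comm v₂ v₀, heron_dist_eq_sq]
    exact sq_nonneg _
  · rw [dist_comm v₃ v₂, dist_comm v₂ v₀, heron_dist_eq_sq]
    exact sq_nonneg _
  · rw [hheron]
    positivity
  · rw [hheron]
    exact mul_lt_of_lt_one_left hheron_pos (by nlinarith)

end Triangle

lemma not_collinear_and_exists_pos_weights {E : Type*} [NormedAddCommGroup E] [NormedSpace ℝ E]
    [FiniteDimensional ℝ E] (hE : Module.finrank ℝ E = 2) {a b c p : E}
    (hp : p ∈ interior (convexHull ℝ {a, b, c})) :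
    ¬Collinear ℝ {a, b, c} ∧ ∃ wa wb wc : ℝ, 0 < wa ∧ 0 < wb ∧ 0 < wc ∧ wa + wb + wc = 1 ∧
      p = wa • a + wb • b + wc • c := by
  have hspan : affineSpan ℝ {a, b, c} = ⊤ := affineSpan_eq_top_of_nonempty_interior ⟨p, hp⟩
  have hcol : ¬Collinear ℝ {a, b, c} := by
    rw [collinear_iff_finrank_le_one, ← direction_affineSpan, hspan, AffineSubspace.direction_top,
      finrank_top, hE]
    norm_num
  have hrange : Set.range ![a, b, c] = {a, b, c} := by
    rw [Matrix.range_cons, Matrix.range_cons_cons_empty, Set.singleton_union]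
  let B : AffineBasis (Fin 3) ℝ E :=
    ⟨![a, b, c], affineIndependent_iff_not_collinear_set.2 hcol, by rw [hrange, hspan]⟩
  rw [← show Set.range B = {a, b, c} from hrange, B.interior_convexHull] at hp
  have hsum := B.sum_coord_apply_eq_one p
  have hcomb := B.linear_combination_coord_eq_self p
  simp only [Fin.sum_univ_three] at hsum hcomb
  exact ⟨hcol, _, _, _, hp 0, hp 1, hp 2, hsum, hcomb.symm⟩

theorem SimpleReflexQuad.isReflexQuadShape {v : ℕ → E2} (hv : SimpleReflexQuad v) :
    IsReflexQuadShape (dist (v 1) (v 0)) (dist (v 2) (v 1)) (dist (v 3) (v 2)) (dist (v 0) (v 3))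
      (dist (v 2) (v 0) ^ 2) (dist (v 3) (v 1) ^ 2) := by
  obtain ⟨hcol, w₀, w₁, w₃, h₀, h₁, h₃, hw, hv₂⟩ :=
    not_collinear_and_exists_pos_weights finrank_euclideanSpace_fin hv.2
  exact isReflexQuadShape_of_pos_weights h₀ h₁ h₃ hw hv₂ hcol

/-- For two simple quadrilaterals with equal corresponding
edge lengths, each reflex at its third vertex, the interior diagonal
`[v 0, v 2]` is shorter in the first exactly when the exterior diagonal
`[v 1, v 3]` is shorter in the first. -/
theorem reflex_quad_diagonals (v u : ℕ → E2)
    (hv : SimpleReflexQuad v) (hu : SimpleReflexQuad u)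
    (hlen : ∀ i < 4, dist (v ((i+1) % 4)) (v i) = dist (u ((i+1) % 4)) (u i)) :
    dist (v 2) (v 0) < dist (u 2) (u 0) ↔ dist (v 3) (v 1) < dist (u 3) (u 1) := by
  have hu' := hu.isReflexQuadShape
  rw [← hlen 0 (by norm_num), ← hlen 1 (by norm_num), ← hlen 2 (by norm_num),
    ← hlen 3 (by norm_num)] at hu'
  rw [← pow_lt_pow_iff_left₀ dist_nonneg dist_nonneg two_ne_zero,
    ← pow_lt_pow_iff_left₀ dist_nonneg dist_nonneg two_ne_zero]
  exact hv.isReflexQuadShape.lt_iff_lt hu'
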